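/- arXiv:2203.11323 — 6 statements merged into one kernel-verified Lean document; each statement's English description precedes it below -/
import Mathlib

section
/- Let σ : ℝ → ℝ be a bounded measurable function, and let μ : ℝ → ℝ be differentiable at every point, with both μ and its derivative μ' integrable on ℝ. Then the weak derivative of μ∗σ is μ'∗σ; that is, for every smooth compactly supported test function φ : ℝ → ℝ one has ∫_ℝ (μ∗σ)(x) φ'(x) dx = −∫_ℝ (μ'∗σ)(x) φ(x) dx. -/
open MeasureTheory Topology Filter

/-- The convolution `(μ ∗ σ)(x) = ∫ μ(x - y) σ(y) dy`. -/
noncomputable def conv (μ σ : ℝ → ℝ) (x : ℝ) : ℝ := ∫ y : ℝ, μ (x - y) * σ y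

/-- Integrability of the kernel `g (x - y) * σ y * ψ x` on the product space. -/
lemma key_integrable {g σ ψ : ℝ → ℝ} {M : ℝ}
    (hg : Integrable g) (hgm : Measurable g)
    (hσmeas : Measurable σ) (hσbound : ∀ x, |σ x| ≤ M)
    (hψm : Measurable ψ) (hψint : Integrable ψ) :
    Integrable (fun p : ℝ × ℝ => g (p.1 - p.2) * σ p.2 * ψ p.1)
      ((volume : Measure ℝ).prod volume) := by
  set e : ℝ × ℝ → ℝ × ℝ := fun p => (p.1, p.1 - p.2) with he
  have hmp : MeasurePreserving e ((volume : Measure ℝ).prod volume)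
      ((volume : Measure ℝ).prod volume) := by
    have h1 : MeasurePreserving (fun p : ℝ × ℝ => (p.1, -p.2))
        ((volume : Measure ℝ).prod volume) ((volume : Measure ℝ).prod volume) :=
      (MeasurePreserving.id volume).prod (Measure.measurePreserving_neg volume)
    have h2 := measurePreserving_prod_add (volume : Measure ℝ) volume
    have heq : e = (fun z : ℝ × ℝ => (z.1, z.1 + z.2)) ∘ (fun p : ℝ × ℝ => (p.1, -p.2)) := by
      funext p; simp [he, sub_eq_add_neg]
    rw [heq]; exact h2.comp h1
  have hmeas : AEStronglyMeasurable (fun p : ℝ × ℝ => g (p.1 - p.2) * σ p.2 * ψ p.1)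
      ((volume : Measure ℝ).prod volume) :=
    (((hgm.comp (measurable_fst.sub measurable_snd)).mul
      (hσmeas.comp measurable_snd)).mul
      (hψm.comp measurable_fst)).aestronglyMeasurable
  rw [← hmp.integrable_comp hmeas]
  have hcomp : ((fun p : ℝ × ℝ => g (p.1 - p.2) * σ p.2 * ψ p.1) ∘ e)
      = fun p : ℝ × ℝ => g p.2 * σ (p.1 - p.2) * ψ p.1 := by
    funext p; simp [he]
  rw [hcomp]
  have hbound : Integrable (fun p : ℝ × ℝ => (M * |ψ p.1|) * |g p.2|)
      ((volume : Measure ℝ).prod volume) :=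
    (hψint.abs.const_mul M).mul_prod hg.abs
  refine hbound.mono' ?_ ?_
  · exact (((hgm.comp measurable_snd).mul
      (hσmeas.comp (measurable_fst.sub measurable_snd))).mul
      (hψm.comp measurable_fst)).aestronglyMeasurable
  · refine Filter.Eventually.of_forall fun p => ?_
    simp only [norm_mul, Real.norm_eq_abs, abs_abs]
    have h1 := hσbound (p.1 - p.2)
    have h2 : (0:ℝ) ≤ |g p.2| := abs_nonneg _
    have h3 : (0:ℝ) ≤ |ψ p.1| := abs_nonneg _
    have h4 : (0:ℝ) ≤ |σ (p.1 - p.2)| := abs_nonneg _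
    nlinarith [mul_le_mul_of_nonneg_left h1 h2]

/-- Fubini step: integrate the convolution against a test function. -/
lemma conv_swap {g σ ψ : ℝ → ℝ} {M : ℝ}
    (hg : Integrable g) (hgm : Measurable g)
    (hσmeas : Measurable σ) (hσbound : ∀ x, |σ x| ≤ M)
    (hψm : Measurable ψ) (hψint : Integrable ψ) :
    ∫ x : ℝ, conv g σ x * ψ x = ∫ y : ℝ, σ y * ∫ x : ℝ, g (x - y) * ψ x := by
  have h0 : ∀ x : ℝ, conv g σ x * ψ x = ∫ y : ℝ, g (x - y) * σ y * ψ x := by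
    intro x
    rw [conv, ← integral_mul_const]
  calc ∫ x : ℝ, conv g σ x * ψ x
      = ∫ x : ℝ, ∫ y : ℝ, g (x - y) * σ y * ψ x := by
        exact integral_congr_ae (Filter.Eventually.of_forall h0)
    _ = ∫ y : ℝ, ∫ x : ℝ, g (x - y) * σ y * ψ x := by
        exact integral_integral_swap
          (key_integrable hg hgm hσmeas hσbound hψm hψint)
    _ = ∫ y : ℝ, σ y * ∫ x : ℝ, g (x - y) * ψ x := by
        refine integral_congr_ae (Filter.Eventually.of_forall fun y => ?_)
        show (∫ x : ℝ, g (x - y) * σ y * ψ x) = σ y * ∫ x : ℝ, g (x - y) * ψ x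
        rw [← integral_const_mul]
        refine integral_congr_ae (Filter.Eventually.of_forall fun x => ?_)
        ring

theorem stmt_1 (σ μ : ℝ → ℝ) (M : ℝ)
    (hσmeas : Measurable σ) (hσbound : ∀ x, |σ x| ≤ M)
    (hμdiff : ∀ x, DifferentiableAt ℝ μ x)
    (hμint : Integrable μ) (hμ'int : Integrable (deriv μ)) :
    ∀ φ : ℝ → ℝ, ContDiff ℝ (⊤ : ℕ∞) φ → HasCompactSupport φ →
      ∫ x : ℝ, conv μ σ x * deriv φ x = -∫ x : ℝ, conv (deriv μ) σ x * φ x := by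
  intro φ hφ hφsupp
  have hμcont : Continuous μ := by
    rw [continuous_iff_continuousAt]; exact fun x => (hμdiff x).continuousAt
  have hμmeas : Measurable μ := hμcont.measurable
  have hμ'meas : Measurable (deriv μ) := measurable_deriv μ
  have hφcont : Continuous φ := hφ.continuous
  have hφ'cont : Continuous (deriv φ) := hφ.continuous_deriv (by simp)
  have hφ'supp : HasCompactSupport (deriv φ) := hφsupp.deriv
  have hφint : Integrable φ := hφcont.integrable_of_hasCompactSupport hφsupp
  have hφ'int : Integrable (deriv φ) :=
    hφ'cont.integrable_of_hasCompactSupport hφ'supp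
  -- integration by parts for fixed y
  have hibp : ∀ y : ℝ, ∫ x : ℝ, μ (x - y) * deriv φ x
      = -∫ x : ℝ, deriv μ (x - y) * φ x := by
    intro y
    have hu : ∀ x : ℝ, HasDerivAt (fun x => μ (x - y)) (deriv μ (x - y)) x := by
      intro x
      have := ((hμdiff (x - y)).hasDerivAt).comp x ((hasDerivAt_id x).sub_const y)
      rw [mul_one] at this
      exact this
    have hv : ∀ x : ℝ, HasDerivAt φ (deriv φ x) x := fun x =>
      ((hφ.differentiable (by simp)) x).hasDerivAt
    have hμy_cont : Continuous (fun x : ℝ => μ (x - y)) :=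
      hμcont.comp (continuous_id.sub continuous_const)
    have huv' : Integrable (fun x : ℝ => μ (x - y) * deriv φ x) :=
      (hμy_cont.mul hφ'cont).integrable_of_hasCompactSupport
        (hφ'supp.mul_left)
    have hu'v : Integrable (fun x : ℝ => deriv μ (x - y) * φ x) := by
      have h1 : Integrable (fun x : ℝ => deriv μ (x - y)) :=
        hμ'int.comp_sub_right y
      obtain ⟨C, hC⟩ := hφcont.bounded_above_of_compact_support hφsupp
      exact (h1.bdd_mul hφcont.aestronglyMeasurable (Filter.Eventually.of_forall fun x => by
        simpa [Real.norm_eq_abs] using hC x)).congr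
        (Filter.Eventually.of_forall fun x => by ring)
    have huv : Integrable (fun x : ℝ => μ (x - y) * φ x) :=
      (hμy_cont.mul hφcont).integrable_of_hasCompactSupport
        (hφsupp.mul_left)
    exact MeasureTheory.integral_mul_deriv_eq_deriv_mul_of_integrable
      (fun x _ => hu x) (fun x _ => hv x) huv' hu'v huv
  rw [conv_swap hμint hμmeas hσmeas hσbound hφ'cont.measurable hφ'int,
    conv_swap hμ'int hμ'meas hσmeas hσbound hφcont.measurable hφint]
  rw [← integral_neg]
  refine integral_congr_ae (Filter.Eventually.of_forall fun y => ?_)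
  show σ y * (∫ x : ℝ, μ (x - y) * deriv φ x) = -(σ y * ∫ x : ℝ, deriv μ (x - y) * φ x)
  rw [hibp y]
  ring
end

section
/- Let σ : ℝ → ℝ be a bounded measurable function of bounded variation on ℝ, and let μ : ℝ → ℝ be differentiable at every point, with both μ and its derivative μ' integrable on ℝ. Then μ∗σ is continuously differentiable on ℝ: at every x ∈ ℝ the derivative of μ∗σ exists and equals (μ'∗σ)(x), and moreover the function μ'∗σ is uniformly continuous on ℝ. -/
/-!
Since `μ'` need not be bounded, we do not differentiate under the integral sign. Instead,
Fubini and the fundamental theorem of calculus give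
`(μ ∗ σ)(b) - (μ ∗ σ)(a) = ∫ t in a..b, (μ' ∗ σ)(t)`, so `μ ∗ σ` is a primitive of `μ' ∗ σ`.
The latter is uniformly continuous because `|(f ∗ σ)(a) - (f ∗ σ)(b)| ≤ M ‖f(· + (a - b)) - f‖₁`
for `|σ| ≤ M`, and translation is continuous in `L¹`.
-/

open MeasureTheory Topology Filter

theorem MeasureTheory.Integrable.tendsto_integral_norm_comp_add_sub {E : Type*}
    [NormedAddCommGroup E] {f : ℝ → E} (hf : Integrable f) :
    Tendsto (fun h => ∫ z, ‖f (z + h) - f z‖) (𝓝 0) (𝓝 0) := by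
  have hT : ∀ h : ℝ, MeasurePreserving (fun z : ℝ => z + h) volume volume :=
    measurePreserving_add_right volume
  let T : ℝ → C(ℝ, ℝ) := fun h => ⟨(· + h), continuous_add_const h⟩
  let F : ℝ → Lp E 1 (volume : Measure ℝ) := fun h =>
    Lp.compMeasurePreserving (T h) (hT h) (hf.toL1 f)
  have hF : Continuous F :=
    continuous_const.compMeasurePreservingLp
      (ContinuousMap.continuous_of_continuous_uncurry _ (continuous_snd.add continuous_fst))
      hT ENNReal.one_ne_top
  have hFcoe : ∀ h, F h =ᵐ[volume] fun z => f (z + h) := fun h =>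
    (Lp.coeFn_compMeasurePreserving _ (hT h)).trans
      ((hT h).quasiMeasurePreserving.ae_eq hf.coeFn_toL1)
  have hdist : ∀ h, dist (F h) (F 0) = ∫ z, ‖f (z + h) - f z‖ := fun h => by
    rw [L1.dist_eq_integral_dist]
    refine integral_congr_ae ?_
    filter_upwards [hFcoe h, hFcoe 0] with z hh h0
    simp [hh, h0, dist_eq_norm]
  have := (hF.tendsto 0).dist (tendsto_const_nhds (x := F 0))
  rw [dist_self] at this
  simpa only [hdist] using this

theorem integral_norm_mul_le_of_abs_le {α : Type*} [MeasurableSpace α] {ν : Measure α}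
    {f σ : α → ℝ} {M : ℝ} (hf : Integrable f ν) (hM : ∀ y, |σ y| ≤ M) :
    ∫ y, ‖f y * σ y‖ ∂ν ≤ M * ∫ y, ‖f y‖ ∂ν := by
  rw [← integral_const_mul]
  refine integral_mono_of_nonneg (.of_forall fun y => norm_nonneg _)
    (hf.norm.const_mul M) (.of_forall fun y => ?_)
  dsimp only
  rw [norm_mul, mul_comm, Real.norm_eq_abs (σ y)]
  exact mul_le_mul_of_nonneg_right (hM y) (norm_nonneg _)

section Convolution

variable {f σ : ℝ → ℝ} {M : ℝ}

theorem integrable_comp_sub_mul (hf : Integrable f) (hσ : AEStronglyMeasurable σ)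
    (hM : ∀ y, |σ y| ≤ M) (x : ℝ) : Integrable (fun y => f (x - y) * σ y) :=
  (hf.comp_sub_left x).mul_bdd hσ (.of_forall hM)

theorem abs_conv_sub_conv_le (hf : Integrable f) (hσ : AEStronglyMeasurable σ)
    (hM : ∀ y, |σ y| ≤ M) (a b : ℝ) :
    |conv f σ a - conv f σ b| ≤ M * ∫ z, ‖f (z + (a - b)) - f z‖ := by
  have hdiff : conv f σ a - conv f σ b = ∫ y, (f (a - y) - f (b - y)) * σ y := by
    simp only [conv, sub_mul]
    exact (integral_sub (integrable_comp_sub_mul hf hσ hM a)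
      (integrable_comp_sub_mul hf hσ hM b)).symm
  have hshift : ∫ y, ‖f (a - y) - f (b - y)‖ = ∫ z, ‖f (z + (a - b)) - f z‖ := by
    rw [← integral_sub_left_eq_self _ volume b]
    congr 1 with z
    ring_nf
  calc |conv f σ a - conv f σ b|
      ≤ ∫ y, ‖(f (a - y) - f (b - y)) * σ y‖ := by
        rw [hdiff, ← Real.norm_eq_abs]; exact norm_integral_le_integral_norm _
    _ ≤ M * ∫ y, ‖f (a - y) - f (b - y)‖ :=
        integral_norm_mul_le_of_abs_le ((hf.comp_sub_left a).sub (hf.comp_sub_left b)) hM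
    _ = M * ∫ z, ‖f (z + (a - b)) - f z‖ := by rw [hshift]

theorem uniformContinuous_conv (hf : Integrable f) (hσ : AEStronglyMeasurable σ)
    (hM : ∀ y, |σ y| ≤ M) : UniformContinuous (conv f σ) := by
  have hmod : Tendsto (fun h => M * ∫ z, ‖f (z + h) - f z‖) (𝓝 0) (𝓝 0) := by
    simpa using hf.tendsto_integral_norm_comp_add_sub.const_mul M
  rw [Metric.uniformContinuous_iff]
  intro ε hε
  obtain ⟨δ, hδ, hsmall⟩ := Metric.eventually_nhds_iff.1 (hmod.eventually (gt_mem_nhds hε))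
  refine ⟨δ, hδ, fun {a b} hab => ?_⟩
  rw [Real.dist_eq]
  exact (abs_conv_sub_conv_le hf hσ hM a b).trans_lt (hsmall (by simpa [Real.dist_eq] using hab))

theorem integrable_prod_comp_sub_mul {ν : Measure ℝ} [IsFiniteMeasure ν] (hfm : Measurable f)
    (hf : Integrable f) (hσ : Measurable σ) (hM : ∀ y, |σ y| ≤ M) :
    Integrable (fun p : ℝ × ℝ => f (p.1 - p.2) * σ p.2) (ν.prod volume) := by
  have hmeas : AEStronglyMeasurable (fun p : ℝ × ℝ => f (p.1 - p.2) * σ p.2) (ν.prod volume) :=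
    ((hfm.comp (measurable_fst.sub measurable_snd)).mul
      (hσ.comp measurable_snd)).aestronglyMeasurable
  refine (integrable_prod_iff hmeas).2
    ⟨.of_forall (integrable_comp_sub_mul hf hσ.aestronglyMeasurable hM), ?_⟩
  refine (integrable_const (M * ∫ z, ‖f z‖)).mono' hmeas.norm.integral_prod_right'
    (.of_forall fun t => ?_)
  rw [Real.norm_of_nonneg (integral_nonneg fun y => norm_nonneg _)]
  calc ∫ y, ‖f (t - y) * σ y‖
      ≤ M * ∫ y, ‖f (t - y)‖ := integral_norm_mul_le_of_abs_le (hf.comp_sub_left t) hM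
    _ = M * ∫ z, ‖f z‖ := by rw [integral_sub_left_eq_self (fun z => ‖f z‖) volume t]

theorem integral_conv_deriv {μ : ℝ → ℝ} (hμ : ∀ x, DifferentiableAt ℝ μ x)
    (hμi : Integrable μ) (hμ'i : Integrable (deriv μ)) (hσ : Measurable σ)
    (hM : ∀ y, |σ y| ≤ M) (a b : ℝ) :
    ∫ t in a..b, conv (deriv μ) σ t = conv μ σ b - conv μ σ a := by
  wlog hab : a ≤ b generalizing a b
  · rw [intervalIntegral.integral_symm, this b a (le_of_not_ge hab)]
    ring
  have hFTC (y : ℝ) : ∫ t in a..b, deriv μ (t - y) = μ (b - y) - μ (a - y) :=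
    intervalIntegral.integral_eq_sub_of_hasDerivAt
      (fun t _ => (hμ (t - y)).hasDerivAt.comp_sub_const t y)
      (hμ'i.comp_sub_right y).intervalIntegrable
  have hint := integrable_comp_sub_mul hμi hσ.aestronglyMeasurable hM
  calc ∫ t in a..b, conv (deriv μ) σ t
      = ∫ t in Set.Ioc a b, ∫ y, deriv μ (t - y) * σ y := intervalIntegral.integral_of_le hab
    _ = ∫ y, ∫ t in Set.Ioc a b, deriv μ (t - y) * σ y :=
        integral_integral_swap (integrable_prod_comp_sub_mul (measurable_deriv μ) hμ'i hσ hM)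
    _ = ∫ y, (μ (b - y) * σ y - μ (a - y) * σ y) := by
        congr 1 with y
        rw [integral_mul_const, ← intervalIntegral.integral_of_le hab, hFTC, sub_mul]
    _ = conv μ σ b - conv μ σ a := integral_sub (hint b) (hint a)

end Convolution

theorem stmt_2_general (σ μ : ℝ → ℝ) (M : ℝ)
    (hσmeas : Measurable σ) (hσbound : ∀ x, |σ x| ≤ M)
    (hμdiff : ∀ x, DifferentiableAt ℝ μ x)
    (hμint : Integrable μ) (hμ'int : Integrable (deriv μ)) :
    (∀ x : ℝ, HasDerivAt (conv μ σ) (conv (deriv μ) σ x) x) ∧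
    UniformContinuous (conv (deriv μ) σ) := by
  have huc := uniformContinuous_conv hμ'int hσmeas.aestronglyMeasurable hσbound
  refine ⟨fun x => ?_, huc⟩
  have hcont := huc.continuous
  have hFTC : HasDerivAt (fun u => conv μ σ x + ∫ t in x..u, conv (deriv μ) σ t)
      (conv (deriv μ) σ x) x :=
    (intervalIntegral.integral_hasDerivAt_right (hcont.intervalIntegrable x x)
      (hcont.stronglyMeasurableAtFilter _ _) hcont.continuousAt).const_add _
  refine hFTC.congr_of_eventuallyEq (.of_forall fun u => ?_)
  simp only [integral_conv_deriv hμdiff hμint hμ'int hσmeas hσbound, add_sub_cancel]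

theorem stmt_2 (σ μ : ℝ → ℝ) (M : ℝ)
    (hσmeas : Measurable σ) (hσbound : ∀ x, |σ x| ≤ M)
    (hσBV : eVariationOn σ Set.univ < ⊤)
    (hμdiff : ∀ x, DifferentiableAt ℝ μ x)
    (hμint : Integrable μ) (hμ'int : Integrable (deriv μ)) :
    (∀ x : ℝ, HasDerivAt (conv μ σ) (conv (deriv μ) σ x) x) ∧
    UniformContinuous (conv (deriv μ) σ) :=
  stmt_2_general σ μ M hσmeas hσbound hμdiff hμint hμ'int
end

section
/- Let σ : ℝ → ℝ be a K-quantiser and let μ : ℝ → ℝ be a probability density which is differentiable at every point with integrable derivative μ'. Then the function x ↦ E_μ[σ(x−ν)] = (μ∗σ)(x) is differentiable at every point of ℝ, its derivative is bounded and continuous, and it satisfies d/dx (μ∗σ)(x) = (μ'∗σ)(x) for all x ∈ ℝ. -/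
/-!
Convolving with the Heaviside step `H_θ` gives a shifted primitive:
`(f ∗ H_θ)(x) = ∫_{-∞}^{x-θ} f`. Hence `μ ∗ σ` is a constant plus a combination of the
primitives `x ↦ ∫_{-∞}^{x-θ_k} μ`, whose derivative is `Σ (q_k - q_{k-1}) μ(x - θ_k)`.
Since `μ` and `μ'` are integrable, `μ` vanishes at `±∞`, so `∫_{-∞}^z μ' = μ z` and
`∫ μ' = 0`; the same decomposition then shows that `μ' ∗ σ` is that very sum, which is
continuous and bounded by `Σ |q_k - q_{k-1}| ∫ |μ'|`.
-/

open MeasureTheory Topology Filter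

/-- The Heaviside function `H_θ`: `0` for `x < θ`, `1` for `x ≥ θ`. -/
noncomputable def heaviside (θ x : ℝ) : ℝ := if x < θ then 0 else 1

/-- The `K`-quantiser with levels `q 0 < … < q (K-1)` and thresholds `θ 1 < … < θ (K-1)`:
`σ(x) = q 0 + Σ_{k=1}^{K-1} (q k - q (k-1)) H_{θ k}(x)`. -/
noncomputable def quantiser (K : ℕ) (q θ : ℕ → ℝ) (x : ℝ) : ℝ :=
  q 0 + ∑ k ∈ Finset.Icc 1 (K - 1), (q k - q (k - 1)) * heaviside (θ k) x

open Set

noncomputable def jumpSum (K : ℕ) (q θ : ℕ → ℝ) (g : ℝ → ℝ) (x : ℝ) : ℝ :=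
  ∑ k ∈ Finset.Icc 1 (K - 1), (q k - q (k - 1)) * g (x - θ k)

lemma heaviside_eq_indicator (θ : ℝ) : heaviside θ = (Ici θ).indicator 1 := by
  ext x
  by_cases h : x < θ <;> simp [heaviside, h, not_lt.mp]

lemma measurable_heaviside (θ : ℝ) : Measurable (heaviside θ) := by
  rw [heaviside_eq_indicator]
  exact measurable_const.indicator measurableSet_Ici

lemma norm_heaviside_le (θ x : ℝ) : ‖heaviside θ x‖ ≤ 1 := by
  unfold heaviside; split_ifs <;> simp

lemma integrable_mul_heaviside {f : ℝ → ℝ} (hf : Integrable f) (x θ : ℝ) :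
    Integrable (fun y => f (x - y) * heaviside θ y) :=
  (hf.comp_sub_left x).mul_bdd (measurable_heaviside θ).aestronglyMeasurable
    (ae_of_all _ (norm_heaviside_le θ))

lemma integral_mul_heaviside (f : ℝ → ℝ) (x θ : ℝ) :
    ∫ y, f (x - y) * heaviside θ y = ∫ t in Iic (x - θ), f t := by
  rw [← integral_sub_left_eq_self _ volume x, ← integral_indicator measurableSet_Iic]
  congr 1 with t
  by_cases h : t ≤ x - θ
  · simp [heaviside, h, show ¬ x - t < θ by linarith]
  · simp [heaviside, h, show x - t < θ by linarith]

lemma conv_quantiser {f : ℝ → ℝ} (hf : Integrable f) (K : ℕ) (q θ : ℕ → ℝ) (x : ℝ) :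
    conv f (quantiser K q θ) x =
      (∫ t, f t) * q 0 + jumpSum K q θ (fun z => ∫ t in Iic z, f t) x := by
  have hsplit : ∀ y, f (x - y) * quantiser K q θ y = f (x - y) * q 0 +
      ∑ k ∈ Finset.Icc 1 (K - 1), (q k - q (k - 1)) * (f (x - y) * heaviside (θ k) y) := by
    intro y
    rw [quantiser, mul_add, Finset.mul_sum]
    exact congrArg _ (Finset.sum_congr rfl fun k _ => by ring)
  have hterm : ∀ k ∈ Finset.Icc 1 (K - 1),
      Integrable (fun y => (q k - q (k - 1)) * (f (x - y) * heaviside (θ k) y)) :=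
    fun k _ => (integrable_mul_heaviside hf x (θ k)).const_mul _
  simp_rw [conv, hsplit]
  rw [integral_add ((hf.comp_sub_left x).mul_const _) (integrable_finsetSum _ hterm),
    integral_finsetSum _ hterm, integral_mul_const, integral_sub_left_eq_self f volume x]
  simp_rw [integral_const_mul, integral_mul_heaviside]
  rfl

lemma HasDerivAt.jumpSum {g g' : ℝ → ℝ} (K : ℕ) (q θ : ℕ → ℝ) {x : ℝ}
    (hg : ∀ k ∈ Finset.Icc 1 (K - 1), HasDerivAt g (g' (x - θ k)) (x - θ k)) :
    HasDerivAt (jumpSum K q θ g) (jumpSum K q θ g' x) x := by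
  unfold _root_.jumpSum
  exact HasDerivAt.fun_sum fun k hk =>
    ((hg k hk).comp_sub_const x (θ k)).const_mul _

lemma Continuous.jumpSum {g : ℝ → ℝ} (hg : Continuous g) (K : ℕ) (q θ : ℕ → ℝ) :
    Continuous (jumpSum K q θ g) :=
  continuous_finsetSum _ fun _ _ => continuous_const.mul (hg.comp (continuous_sub_right _))

lemma abs_jumpSum_le {g : ℝ → ℝ} {B : ℝ} (hg : ∀ z, |g z| ≤ B) (K : ℕ) (q θ : ℕ → ℝ)
    (x : ℝ) :
    |jumpSum K q θ g x| ≤ (∑ k ∈ Finset.Icc 1 (K - 1), |q k - q (k - 1)|) * B := by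
  rw [jumpSum, Finset.sum_mul]
  refine (Finset.abs_sum_le_sum_abs _ _).trans (Finset.sum_le_sum fun k _ => ?_)
  rw [abs_mul]
  exact mul_le_mul_of_nonneg_left (hg _) (abs_nonneg _)

lemma hasDerivAt_integral_Iic {f : ℝ → ℝ} (hf : Integrable f) (hc : Continuous f) (z : ℝ) :
    HasDerivAt (fun z => ∫ t in Iic z, f t) (f z) z := by
  have hsplit : (fun z => ∫ t in Iic z, f t) =
      fun z => (∫ t in Iic 0, f t) + ∫ t in (0 : ℝ)..z, f t := by
    ext z
    rw [← intervalIntegral.integral_Iic_sub_Iic hf.integrableOn hf.integrableOn]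
    ring
  rw [hsplit]
  exact (intervalIntegral.integral_hasDerivAt_right hf.intervalIntegrable
    hc.stronglyMeasurable.stronglyMeasurableAtFilter hc.continuousAt).const_add _

section IntegrableDeriv

variable {μ : ℝ → ℝ} (hμ : Integrable μ) (hdiff : ∀ x, DifferentiableAt ℝ μ x)
  (hμ' : Integrable (deriv μ))
include hμ hdiff hμ'

lemma tendsto_atBot_zero_of_integrable_deriv : Tendsto μ atBot (𝓝 0) :=
  tendsto_zero_of_hasDerivAt_of_integrableOn_Iic (a := 0) (fun x _ => (hdiff x).hasDerivAt)
    hμ'.integrableOn hμ.integrableOn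

lemma tendsto_atTop_zero_of_integrable_deriv : Tendsto μ atTop (𝓝 0) :=
  tendsto_zero_of_hasDerivAt_of_integrableOn_Ioi (a := 0) (fun x _ => (hdiff x).hasDerivAt)
    hμ'.integrableOn hμ.integrableOn

lemma integral_Iic_deriv_eq (z : ℝ) : ∫ t in Iic z, deriv μ t = μ z := by
  rw [integral_Iic_of_hasDerivAt_of_tendsto' (fun x _ => (hdiff x).hasDerivAt) hμ'.integrableOn
    (tendsto_atBot_zero_of_integrable_deriv hμ hdiff hμ'), sub_zero]

lemma integral_deriv_eq_zero : ∫ t, deriv μ t = 0 := by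
  rw [integral_of_hasDerivAt_of_tendsto (fun x => (hdiff x).hasDerivAt) hμ'
    (tendsto_atBot_zero_of_integrable_deriv hμ hdiff hμ')
    (tendsto_atTop_zero_of_integrable_deriv hμ hdiff hμ'), sub_zero]

lemma abs_le_integral_norm_deriv (z : ℝ) : |μ z| ≤ ∫ t, ‖deriv μ t‖ := by
  rw [← integral_Iic_deriv_eq hμ hdiff hμ' z, ← Real.norm_eq_abs]
  exact (norm_integral_le_integral_norm _).trans
    (setIntegral_le_integral hμ'.norm (ae_of_all _ fun t => norm_nonneg _))

lemma conv_deriv_quantiser (K : ℕ) (q θ : ℕ → ℝ) :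
    conv (deriv μ) (quantiser K q θ) = jumpSum K q θ μ := by
  ext x
  rw [conv_quantiser hμ', integral_deriv_eq_zero hμ hdiff hμ', zero_mul, zero_add]
  simp_rw [integral_Iic_deriv_eq hμ hdiff hμ']

end IntegrableDeriv

theorem stmt_4_general (K : ℕ) (q θ : ℕ → ℝ)
    (μ : ℝ → ℝ)
    (hμint : Integrable μ)
    (hμdiff : ∀ x, DifferentiableAt ℝ μ x)
    (hμ'int : Integrable (deriv μ)) :
    (∀ x : ℝ,
      HasDerivAt (conv μ (quantiser K q θ)) (conv (deriv μ) (quantiser K q θ) x) x) ∧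
    (∃ C : ℝ, ∀ x : ℝ, |conv (deriv μ) (quantiser K q θ) x| ≤ C) ∧
    Continuous (conv (deriv μ) (quantiser K q θ)) := by
  have hcont : Continuous μ := continuous_iff_continuousAt.2 fun x => (hμdiff x).continuousAt
  rw [conv_deriv_quantiser hμint hμdiff hμ'int]
  refine ⟨fun x => ?_, ⟨_, abs_jumpSum_le (abs_le_integral_norm_deriv hμint hμdiff hμ'int) K q θ⟩,
    hcont.jumpSum K q θ⟩
  have hconv : conv μ (quantiser K q θ) =
      fun x => (∫ t, μ t) * q 0 + jumpSum K q θ (fun z => ∫ t in Iic z, μ t) x :=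
    funext (conv_quantiser hμint K q θ)
  rw [hconv]
  exact (HasDerivAt.jumpSum K q θ fun k _ => hasDerivAt_integral_Iic hμint hcont _).const_add _

theorem stmt_4 (K : ℕ) (hK : 2 ≤ K) (q θ : ℕ → ℝ)
    (hq : ∀ k, k + 1 ≤ K - 1 → q k < q (k + 1))
    (hθ : ∀ k, 1 ≤ k → k + 1 ≤ K - 1 → θ k < θ (k + 1))
    (μ : ℝ → ℝ) (hμ0 : ∀ t, 0 ≤ μ t)
    (hμint : Integrable μ) (hμ1 : ∫ t : ℝ, μ t = 1)
    (hμdiff : ∀ x, DifferentiableAt ℝ μ x)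
    (hμ'int : Integrable (deriv μ)) :
    (∀ x : ℝ,
      HasDerivAt (conv μ (quantiser K q θ)) (conv (deriv μ) (quantiser K q θ) x) x) ∧
    (∃ C : ℝ, ∀ x : ℝ, |conv (deriv μ) (quantiser K q θ) x| ≤ C) ∧
    Continuous (conv (deriv μ) (quantiser K q θ)) :=
  stmt_4_general K q θ μ hμint hμdiff hμ'int
end

section
/- (Compositional convergence of regularised quantised networks.) Let L ≥ 2 and n_0, …, n_L ≥ 1 be integers; for ℓ = 1, …, L fix a matrix W_ℓ ∈ ℝ^{n_ℓ × n_{ℓ−1}} and a vector b_ℓ ∈ ℝ^{n_ℓ}, and let S_ℓ(x) = W_ℓ x + b_ℓ. Fix an input x_0 ∈ ℝ^{n_0}, and define the quantised features by x_ℓ = H_0(S_ℓ(x_{ℓ−1})) componentwise for ℓ = 1, …, L, where H_0 is the Heaviside function. For each ℓ = 1, …, L suppose given: (a) a function λ_ℓ : (0,∞) → (0,∞) with λ_ℓ(λ) → 0 as λ → 0⁺; (b) a family of regularisations σ_η : ℝ → ℝ (η > 0), each σ_η being a strictly increasing continuous bijection of ℝ onto (0,1) (in particular 0 ≤ σ_η(s)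 ≤ 1 for all s, and the inverse σ_η^{−1} : (0,1) → ℝ is well-defined), such that σ_η(s) → H_0(s) as η → 0⁺ for every s ∈ ℝ; and (c) a convergence rate r_ℓ with r_ℓ(λ) > 0 for λ > 0. Define the regularised features by x̂_0(λ) = x_0 and x̂_ℓ(λ) = σ_{λ_ℓ(λ)}(S_ℓ(x̂_{ℓ−1}(λ))) componentwise. Assume that for every ε > 0 and every ℓ = 1, …, L: (i) σ_{λ_ℓ(λ)}^{−1}(ε r_ℓ(λ)) → 0 as λ → 0⁺; (ii) σ_{λ_ℓ(λ)}^{−1}(1 − ε r_ℓ(λ)) → 0 as λ → 0⁺; (iii) (1 − σ_{λ_ℓ(λ)}(0)) / r_ℓ(λ) → 0 as λ → 0⁺; and, for ℓ = 2, …, L, (iv) r_{ℓ−1}(λ) / σ_{λ_ℓ(λ)}^{−1}(1 − ε r_ℓ(λ)) → 0 as λ → 0⁺ (the denominator being nonzero for λ small enough). Then for every ℓ = 1, …, L the regularised features converge to the quantised features faster than the rate r_ℓ: ‖x̂_ℓ(λ) − x_ℓ‖ / r_ℓ(λ) → 0 as λ → 0⁺, where ‖·‖ is the Euclidean norm on ℝ^{n_ℓ}.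 -/
/-!
At a single layer, suppose the preactivation `ŝ(λ)` tends to `s`. Then `σ(ŝ(λ))` lies
within `ε r(λ)` of `H_0(s)` as soon as `ŝ(λ)` lies on the correct side of `σ⁻¹(ε r(λ))`
(if `s < 0`) or of `σ⁻¹(1 - ε r(λ))` (if `s ≥ 0`). By (i) and (ii) both thresholds tend
to `0`, which settles `s ≠ 0`. For `s = 0`, (iii) makes `σ⁻¹(1 - ε r_ℓ(λ))` negative and
(iv) makes it dominate the error `O(r_{ℓ-1}(λ))` inherited from the previous layer, so
`ŝ(λ) ≥ σ⁻¹(1 - ε r_ℓ(λ))` still holds. By induction on `ℓ`, `x̂_ℓ - x_ℓ = o(r_ℓ)`; the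
first layer has exact inputs, so there the inherited error scale is `0`.
-/

open MeasureTheory Topology Filter

open Asymptotics Set

section

variable {α : Type*} {F : Filter α}

theorem eventually_mul_mem_Ioo {r : α → ℝ} (hr : Tendsto r F (𝓝 0))
    (hr_pos : ∀ᶠ l in F, 0 < r l) {ε : ℝ} (hε : 0 < ε) : ∀ᶠ l in F, ε * r l ∈ Ioo 0 1 := by
  filter_upwards [hr_pos, hr.eventually (eventually_lt_nhds (inv_pos.2 hε))] with l hpos hlt
  refine ⟨by positivity, ?_⟩
  calc ε * r l < ε * ε⁻¹ := by gcongr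
    _ = 1 := mul_inv_cancel₀ hε.ne'

theorem eventually_one_sub_mul_mem_Ioo {r : α → ℝ} (hr : Tendsto r F (𝓝 0))
    (hr_pos : ∀ᶠ l in F, 0 < r l) {ε : ℝ} (hε : 0 < ε) : ∀ᶠ l in F, 1 - ε * r l ∈ Ioo 0 1 := by
  filter_upwards [eventually_mul_mem_Ioo hr hr_pos hε] with l ⟨h0, h1⟩
  constructor <;> linarith

theorem eventually_le_of_isLittleO_of_tendsto_div {f ρ t : α → ℝ} (hf : f =o[F] ρ)
    (ht : ∀ᶠ l in F, t l < 0) (hρt : Tendsto (fun l => ρ l / t l) F (𝓝 0)) :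
    ∀ᶠ l in F, t l ≤ f l := by
  have hsmall := hρt.abs.eventually (eventually_le_nhds (show |(0 : ℝ)| < 1 by simp))
  filter_upwards [hf.bound one_pos, ht, hsmall] with l hfl htl hρl
  rw [abs_div, div_le_one (abs_pos.2 htl.ne), abs_of_neg htl] at hρl
  rw [Real.norm_eq_abs, Real.norm_eq_abs, one_mul] at hfl
  linarith [neg_abs_le (f l)]

theorem isLittleO_mulVec_sub {m k : Type*} [Fintype k] (A : Matrix m k ℝ) {x : α → k → ℝ}
    {y : k → ℝ} {ρ : α → ℝ} (h : ∀ c, (fun l => x l c - y c) =o[F] ρ) (i : m) :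
    (fun l => A.mulVec (x l) i - A.mulVec y i) =o[F] ρ := by
  have hsum (l : α) : A.mulVec (x l) i - A.mulVec y i = ∑ c, A i c * (x l c - y c) := by
    simp only [Matrix.mulVec, dotProduct, mul_sub, Finset.sum_sub_distrib]
  simp only [hsum]
  exact IsLittleO.fun_sum fun c _ => (h c).const_mul_left (A i c)

theorem isLittleO_sqrt_sum_sq {ι : Type*} [Fintype ι] {d : α → ι → ℝ} {g : α → ℝ}
    (h : ∀ i, (fun l => d l i) =o[F] g) : (fun l => √(∑ i, d l i ^ 2)) =o[F] g := by
  have hEuc :=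
    (((EuclideanSpace.equiv ι ℝ).symm : (ι → ℝ) →L[ℝ] EuclideanSpace ℝ ι).isBigO_comp d F)
      |>.trans_isLittleO (isLittleO_pi.2 h)
  refine hEuc.norm_left.congr_left fun l => ?_
  simp [EuclideanSpace.norm_eq]

end

structure IsHeavisideRegularisation (σ σinv : ℝ → ℝ) : Prop where
  strictMono : StrictMono σ
  range_eq : range σ = Ioo 0 1
  apply_inv : ∀ y ∈ Ioo (0 : ℝ) 1, σ (σinv y) = y

namespace IsHeavisideRegularisation

variable {σ σinv : ℝ → ℝ} (hσ : IsHeavisideRegularisation σ σinv) {x y : ℝ}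
include hσ

theorem apply_mem_Ioo (x : ℝ) : σ x ∈ Ioo 0 1 :=
  hσ.range_eq ▸ mem_range_self x

theorem apply_le_of_le_inv (hy : y ∈ Ioo 0 1) (hx : x ≤ σinv y) : σ x ≤ y :=
  hσ.apply_inv y hy ▸ hσ.strictMono.monotone hx

theorem le_apply_of_inv_le (hy : y ∈ Ioo 0 1) (hx : σinv y ≤ x) : y ≤ σ x :=
  hσ.apply_inv y hy ▸ hσ.strictMono.monotone hx

theorem inv_lt_of_lt_apply (hy : y ∈ Ioo 0 1) (hx : y < σ x) : σinv y < x :=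
  hσ.strictMono.lt_iff_lt.mp (by rwa [hσ.apply_inv y hy])

end IsHeavisideRegularisation

section Layer

variable {α : Type*} {F : Filter α} {σ σinv : α → ℝ → ℝ} {r : α → ℝ}
  (hσ : ∀ᶠ l in F, IsHeavisideRegularisation (σ l) (σinv l))
  (hr : Tendsto r F (𝓝 0)) (hr_pos : ∀ᶠ l in F, 0 < r l)
include hσ hr hr_pos

theorem apply_isLittleO_of_le_inv {x : α → ℝ}
    (hx : ∀ ε > 0, ∀ᶠ l in F, x l ≤ σinv l (ε * r l)) :
    (fun l => σ l (x l)) =o[F] r := by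
  refine IsLittleO.of_bound fun ε hε => ?_
  filter_upwards [hσ, hr_pos, hx ε hε, eventually_mul_mem_Ioo hr hr_pos hε]
    with l hσl hpos hxl hmem
  rw [Real.norm_of_nonneg (hσl.apply_mem_Ioo _).1.le, Real.norm_of_nonneg hpos.le]
  exact hσl.apply_le_of_le_inv hmem hxl

theorem apply_sub_one_isLittleO_of_inv_le {x : α → ℝ}
    (hx : ∀ ε > 0, ∀ᶠ l in F, σinv l (1 - ε * r l) ≤ x l) :
    (fun l => σ l (x l) - 1) =o[F] r := by
  refine IsLittleO.of_bound fun ε hε => ?_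
  filter_upwards [hσ, hr_pos, hx ε hε, eventually_one_sub_mul_mem_Ioo hr hr_pos hε]
    with l hσl hpos hxl hmem
  have hle := hσl.le_apply_of_inv_le hmem hxl
  have hlt := (hσl.apply_mem_Ioo (x l)).2
  rw [Real.norm_of_nonpos (by linarith), Real.norm_of_nonneg hpos.le]
  linarith

theorem eventually_inv_one_sub_mul_neg
    (h_iii : Tendsto (fun l => (1 - σ l 0) / r l) F (𝓝 0)) {ε : ℝ} (hε : 0 < ε) :
    ∀ᶠ l in F, σinv l (1 - ε * r l) < 0 := by
  filter_upwards [hσ, hr_pos, h_iii.eventually (eventually_lt_nhds hε),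
    eventually_one_sub_mul_mem_Ioo hr hr_pos hε] with l hσl hpos hlt hmem
  refine hσl.inv_lt_of_lt_apply hmem ?_
  rw [div_lt_iff₀ hpos] at hlt
  linarith

theorem apply_sub_heaviside_isLittleO
    (h_i : ∀ ε > 0, Tendsto (fun l => σinv l (ε * r l)) F (𝓝 0))
    (h_ii : ∀ ε > 0, Tendsto (fun l => σinv l (1 - ε * r l)) F (𝓝 0))
    {x : α → ℝ} {s : ℝ} (hx : Tendsto x F (𝓝 s))
    (hx_zero : s = 0 → ∀ ε > 0, ∀ᶠ l in F, σinv l (1 - ε * r l) ≤ x l) :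
    (fun l => σ l (x l) - heaviside 0 s) =o[F] r := by
  rcases lt_or_ge s 0 with hs | hs
  · simp only [heaviside, hs, if_true, sub_zero]
    refine apply_isLittleO_of_le_inv hσ hr hr_pos fun ε hε => ?_
    filter_upwards [hx.eventually (eventually_lt_nhds (by linarith : s < s / 2)),
      (h_i ε hε).eventually (eventually_gt_nhds (by linarith : s / 2 < 0))] with l h1 h2
    linarith
  · simp only [heaviside, not_lt.2 hs, if_false]
    refine apply_sub_one_isLittleO_of_inv_le hσ hr hr_pos fun ε hε => ?_
    rcases hs.eq_or_lt with hs | hs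
    · exact hx_zero hs.symm ε hε
    filter_upwards [hx.eventually (eventually_gt_nhds (by linarith : s / 2 < s)),
      (h_ii ε hε).eventually (eventually_lt_nhds (by linarith : 0 < s / 2))] with l h1 h2
    linarith

theorem apply_sub_heaviside_isLittleO_of_sub_isLittleO
    (h_i : ∀ ε > 0, Tendsto (fun l => σinv l (ε * r l)) F (𝓝 0))
    (h_ii : ∀ ε > 0, Tendsto (fun l => σinv l (1 - ε * r l)) F (𝓝 0))
    (h_iii : Tendsto (fun l => (1 - σ l 0) / r l) F (𝓝 0))
    {x : α → ℝ} {s : ℝ} {ρ : α → ℝ} (hρ : Tendsto ρ F (𝓝 0))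
    (hx : (fun l => x l - s) =o[F] ρ)
    (h_iv : ∀ ε > 0, Tendsto (fun l => ρ l / σinv l (1 - ε * r l)) F (𝓝 0)) :
    (fun l => σ l (x l) - heaviside 0 s) =o[F] r := by
  refine apply_sub_heaviside_isLittleO hσ hr hr_pos h_i h_ii
    (tendsto_sub_nhds_zero_iff.1 (hx.trans_tendsto hρ)) fun hs ε hε => ?_
  subst hs
  exact eventually_le_of_isLittleO_of_tendsto_div (by simpa using hx)
    (eventually_inv_one_sub_mul_neg hσ hr hr_pos h_iii hε) (h_iv ε hε)

end Layer

theorem stmt_11_general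
    (L : ℕ)
    (n : ℕ → ℕ)
    (W : (j : ℕ) → Matrix (Fin (n j)) (Fin (n (j - 1))) ℝ)
    (bv : (j : ℕ) → Fin (n j) → ℝ)
    (x0 : Fin (n 0) → ℝ)
    -- quantised features
    (xq : (j : ℕ) → Fin (n j) → ℝ)
    (hxq0 : xq 0 = x0)
    (hxq : ∀ j, 1 ≤ j → j ≤ L → ∀ i,
      xq j i = heaviside 0 ((W j).mulVec (xq (j - 1)) i + bv j i))
    -- (a) regularisation-parameter schedules
    (lam : ℕ → ℝ → ℝ)
    (hlam_pos : ∀ j, ∀ l : ℝ, 0 < l → 0 < lam j l)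
    -- (b) the regularisations and their inverses
    (sig : ℕ → ℝ → ℝ → ℝ) (siginv : ℕ → ℝ → ℝ → ℝ)
    (hsig_mono : ∀ j, ∀ η : ℝ, 0 < η → StrictMono (sig j η))
    (hsig_range : ∀ j, ∀ η : ℝ, 0 < η → Set.range (sig j η) = Set.Ioo 0 1)
    (hsig_inv : ∀ j, ∀ η : ℝ, 0 < η → ∀ y ∈ Set.Ioo (0 : ℝ) 1,
      sig j η (siginv j η y) = y)
    -- (c) convergence rates
    (r : ℕ → ℝ → ℝ)
    (hr_lim : ∀ j, Tendsto (r j) (𝓝[>] (0 : ℝ)) (𝓝 0))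
    (hr_pos : ∀ j, ∀ l : ℝ, 0 < l → 0 < r j l)
    -- regularised features
    (xr : ℝ → (j : ℕ) → Fin (n j) → ℝ)
    (hxr0 : ∀ l : ℝ, xr l 0 = x0)
    (hxr : ∀ l : ℝ, 0 < l → ∀ j, 1 ≤ j → j ≤ L → ∀ i,
      xr l j i = sig j (lam j l) ((W j).mulVec (xr l (j - 1)) i + bv j i))
    -- hypotheses (i)-(iv)
    (hyp_i : ∀ j, 1 ≤ j → j ≤ L → ∀ ε : ℝ, 0 < ε →
      Tendsto (fun l => siginv j (lam j l) (ε * r j l)) (𝓝[>] (0 : ℝ)) (𝓝 0))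
    (hyp_ii : ∀ j, 1 ≤ j → j ≤ L → ∀ ε : ℝ, 0 < ε →
      Tendsto (fun l => siginv j (lam j l) (1 - ε * r j l)) (𝓝[>] (0 : ℝ)) (𝓝 0))
    (hyp_iii : ∀ j, 1 ≤ j → j ≤ L →
      Tendsto (fun l => (1 - sig j (lam j l) 0) / r j l) (𝓝[>] (0 : ℝ)) (𝓝 0))
    (hyp_iv : ∀ j, 2 ≤ j → j ≤ L → ∀ ε : ℝ, 0 < ε →
      Tendsto (fun l => r (j - 1) l / siginv j (lam j l) (1 - ε * r j l))
        (𝓝[>] (0 : ℝ)) (𝓝 0)) :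
    ∀ j, 1 ≤ j → j ≤ L →
      Tendsto (fun l : ℝ => Real.sqrt (∑ i, (xr l j i - xq j i) ^ 2) / r j l)
        (𝓝[>] (0 : ℝ)) (𝓝 0) := by
  have hreg (j : ℕ) : ∀ᶠ l in 𝓝[>] (0 : ℝ),
      IsHeavisideRegularisation (sig j (lam j l)) (siginv j (lam j l)) := by
    filter_upwards [self_mem_nhdsWithin] with l hl
    have hη := hlam_pos j l hl
    exact ⟨hsig_mono j _ hη, hsig_range j _ hη, hsig_inv j _ hη⟩
  have hr_pos_ev (j : ℕ) : ∀ᶠ l in 𝓝[>] (0 : ℝ), 0 < r j l :=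
    eventually_nhdsWithin_of_forall (hr_pos j)
  have hlayer : ∀ j, 1 ≤ j → j ≤ L → ∀ i (ρ : ℝ → ℝ), Tendsto ρ (𝓝[>] 0) (𝓝 0) →
      (fun l => (W j).mulVec (xr l (j - 1)) i - (W j).mulVec (xq (j - 1)) i) =o[𝓝[>] 0] ρ →
      (∀ ε > 0, Tendsto (fun l => ρ l / siginv j (lam j l) (1 - ε * r j l)) (𝓝[>] 0) (𝓝 0)) →
      (fun l => xr l j i - xq j i) =o[𝓝[>] (0 : ℝ)] r j := fun j hj hjL i ρ hρ hpre h_iv =>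
    (apply_sub_heaviside_isLittleO_of_sub_isLittleO (hreg j) (hr_lim j) (hr_pos_ev j)
      (hyp_i j hj hjL) (hyp_ii j hj hjL) (hyp_iii j hj hjL) hρ
      (hpre.congr_left fun l => (add_sub_add_right_eq_sub _ _ _).symm) h_iv).congr'
      (eventually_nhdsWithin_of_forall fun l hl => by
        dsimp only; rw [hxr l hl j hj hjL, hxq j hj hjL]) EventuallyEq.rfl
  have herr : ∀ j, 1 ≤ j → j ≤ L → ∀ i,
      (fun l => xr l j i - xq j i) =o[𝓝[>] (0 : ℝ)] r j := by
    intro j hj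
    induction j, hj using Nat.le_induction with
    | base =>
      exact fun h1L i => hlayer 1 le_rfl h1L i 0 tendsto_const_nhds
        (by simp [hxr0, hxq0]) (by simp)
    | succ j hj ih =>
      exact fun hjL i => hlayer (j + 1) (by omega) hjL i (r j) (hr_lim j)
        (isLittleO_mulVec_sub _ (ih (by omega)) i) (hyp_iv (j + 1) (by omega) hjL)
  intro j hj hjL
  refine (isLittleO_iff_tendsto' ?_).1 (isLittleO_sqrt_sum_sq (herr j hj hjL))
  filter_upwards [hr_pos_ev j] with l hl h
  exact absurd h hl.ne'

/-- Compositional convergence of regularised quantised networks.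
Layers are indexed by `j = 1, …, L`; `lam j` is the regularisation-parameter schedule
`λ ↦ λ_j(λ)`, `sig j η` is the regularisation `σ_η` of the Heaviside used at layer `j`,
`siginv j η` is its inverse on `(0,1)`, and `r j` is the convergence rate of layer `j`.
`xq j` are the quantised features and `xr l j` the regularised features at noise
parameter `l`. -/
theorem stmt_11
    (L : ℕ) (hL : 2 ≤ L)
    (n : ℕ → ℕ) (hn : ∀ j, 1 ≤ n j)
    (W : (j : ℕ) → Matrix (Fin (n j)) (Fin (n (j - 1))) ℝ)
    (bv : (j : ℕ) → Fin (n j) → ℝ)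
    (x0 : Fin (n 0) → ℝ)
    -- quantised features
    (xq : (j : ℕ) → Fin (n j) → ℝ)
    (hxq0 : xq 0 = x0)
    (hxq : ∀ j, 1 ≤ j → j ≤ L → ∀ i,
      xq j i = heaviside 0 ((W j).mulVec (xq (j - 1)) i + bv j i))
    -- (a) regularisation-parameter schedules
    (lam : ℕ → ℝ → ℝ)
    (hlam_pos : ∀ j, ∀ l : ℝ, 0 < l → 0 < lam j l)
    (hlam_lim : ∀ j, Tendsto (lam j) (𝓝[>] (0 : ℝ)) (𝓝 0))
    -- (b) the regularisations and their inverses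
    (sig : ℕ → ℝ → ℝ → ℝ) (siginv : ℕ → ℝ → ℝ → ℝ)
    (hsig_mono : ∀ j, ∀ η : ℝ, 0 < η → StrictMono (sig j η))
    (hsig_cont : ∀ j, ∀ η : ℝ, 0 < η → Continuous (sig j η))
    (hsig_range : ∀ j, ∀ η : ℝ, 0 < η → Set.range (sig j η) = Set.Ioo 0 1)
    (hsig_inv : ∀ j, ∀ η : ℝ, 0 < η → ∀ y ∈ Set.Ioo (0 : ℝ) 1,
      sig j η (siginv j η y) = y)
    (hsig_lim : ∀ j, ∀ s : ℝ,
      Tendsto (fun η => sig j η s) (𝓝[>] (0 : ℝ)) (𝓝 (heaviside 0 s)))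
    -- (c) convergence rates
    (r : ℕ → ℝ → ℝ)
    (hr_cont : ∀ j, ContinuousOn (r j) (Set.Ici 0))
    (hr_mono : ∀ j, MonotoneOn (r j) (Set.Ici 0))
    (hr_lim : ∀ j, Tendsto (r j) (𝓝[>] (0 : ℝ)) (𝓝 0))
    (hr_pos : ∀ j, ∀ l : ℝ, 0 < l → 0 < r j l)
    -- regularised features
    (xr : ℝ → (j : ℕ) → Fin (n j) → ℝ)
    (hxr0 : ∀ l : ℝ, xr l 0 = x0)
    (hxr : ∀ l : ℝ, 0 < l → ∀ j, 1 ≤ j → j ≤ L → ∀ i,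
      xr l j i = sig j (lam j l) ((W j).mulVec (xr l (j - 1)) i + bv j i))
    -- hypotheses (i)-(iv)
    (hyp_i : ∀ j, 1 ≤ j → j ≤ L → ∀ ε : ℝ, 0 < ε →
      Tendsto (fun l => siginv j (lam j l) (ε * r j l)) (𝓝[>] (0 : ℝ)) (𝓝 0))
    (hyp_ii : ∀ j, 1 ≤ j → j ≤ L → ∀ ε : ℝ, 0 < ε →
      Tendsto (fun l => siginv j (lam j l) (1 - ε * r j l)) (𝓝[>] (0 : ℝ)) (𝓝 0))
    (hyp_iii : ∀ j, 1 ≤ j → j ≤ L →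
      Tendsto (fun l => (1 - sig j (lam j l) 0) / r j l) (𝓝[>] (0 : ℝ)) (𝓝 0))
    (hyp_iv : ∀ j, 2 ≤ j → j ≤ L → ∀ ε : ℝ, 0 < ε →
      Tendsto (fun l => r (j - 1) l / siginv j (lam j l) (1 - ε * r j l))
        (𝓝[>] (0 : ℝ)) (𝓝 0)) :
    ∀ j, 1 ≤ j → j ≤ L →
      Tendsto (fun l : ℝ => Real.sqrt (∑ i, (xr l j i - xq j i) ^ 2) / r j l)
        (𝓝[>] (0 : ℝ)) (𝓝 0) :=
  stmt_11_general L n W bv x0 xq hxq0 hxq lam hlam_pos sig siginv hsig_mono hsig_range hsig_inv r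
    hr_lim hr_pos xr hxr0 hxr hyp_i hyp_ii hyp_iii hyp_iv
end

section
/- Let r be a convergence rate with r(λ) > 0 for λ > 0, and for each η > 0 let σ_η : ℝ → ℝ be a strictly increasing continuous bijection of ℝ onto (0,1) with inverse σ_η^{−1} : (0,1) → ℝ. Let λ ↦ η(λ) be a function (0,∞) → (0,∞). Suppose that for every ε > 0, σ_{η(λ)}^{−1}(1 − ε r(λ)) → 0 as λ → 0⁺ (the expression being defined for λ small enough that ε r(λ) < 1). Then for every s > 0, (1 − σ_{η(λ)}(s)) / r(λ) → 0 as λ → 0⁺. -/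
open MeasureTheory Topology Filter

/- Fix `ε > 0`. For small `λ` we have `ε r(λ) < 1` and `σ_{η(λ)}⁻¹(1 - ε r(λ)) < s`; applying the
increasing map `σ_{η(λ)}` gives `1 - ε r(λ) < σ_{η(λ)}(s) < 1`, i.e. `0 < (1 - σ_{η(λ)}(s)) / r(λ) < ε`. -/

lemma abs_one_sub_div_lt_of_lt {f : ℝ → ℝ} (hf : StrictMono f) (hf_lt_one : ∀ x, f x < 1)
    {y s ε ρ : ℝ} (hρ : 0 < ρ) (hy : f y = 1 - ε * ρ) (hys : y < s) :
    |(1 - f s) / ρ| < ε := by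
  have hfs : 1 - ε * ρ < f s := hy ▸ hf hys
  rw [abs_of_pos (div_pos (by linarith [hf_lt_one s]) hρ), div_lt_iff₀ hρ]
  linarith

theorem stmt_13_general (r : ℝ → ℝ)
    (hr_lim : Tendsto r (𝓝[>] (0 : ℝ)) (𝓝 0)) (hr_pos : ∀ l : ℝ, 0 < l → 0 < r l)
    (sig : ℝ → ℝ → ℝ) (siginv : ℝ → ℝ → ℝ)
    (hsig_mono : ∀ η : ℝ, 0 < η → StrictMono (sig η))
    (hsig_range : ∀ η : ℝ, 0 < η → Set.range (sig η) = Set.Ioo 0 1)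
    (hsig_inv : ∀ η : ℝ, 0 < η → ∀ y ∈ Set.Ioo (0 : ℝ) 1, sig η (siginv η y) = y)
    (eta : ℝ → ℝ) (heta : ∀ l : ℝ, 0 < l → 0 < eta l)
    (h : ∀ ε : ℝ, 0 < ε →
      Tendsto (fun l => siginv (eta l) (1 - ε * r l)) (𝓝[>] (0 : ℝ)) (𝓝 0)) :
    ∀ s : ℝ, 0 < s →
      Tendsto (fun l => (1 - sig (eta l) s) / r l) (𝓝[>] (0 : ℝ)) (𝓝 0) := by
  intro s hs
  rw [NormedAddGroup.tendsto_nhds_zero]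
  intro ε hε
  filter_upwards [(h ε hε).eventually_lt_const hs, hr_lim.eventually_lt_const (inv_pos.2 hε),
    self_mem_nhdsWithin] with l hinv_lt hr_lt (hl : 0 < l)
  have hη := heta l hl
  have hrl := hr_pos l hl
  have hεr_pos : 0 < ε * r l := mul_pos hε hrl
  have hεr_lt_one : ε * r l < 1 := by
    simpa [hε.ne'] using mul_lt_mul_of_pos_left hr_lt hε
  exact abs_one_sub_div_lt_of_lt (hsig_mono _ hη)
    (fun x => ((hsig_range _ hη ▸ Set.mem_range_self x) : sig (eta l) x ∈ Set.Ioo 0 1).2) hrl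
    (hsig_inv _ hη _ ⟨by linarith, by linarith⟩) hinv_lt

theorem stmt_13 (r : ℝ → ℝ)
    (hr_cont : ContinuousOn r (Set.Ici 0)) (hr_mono : MonotoneOn r (Set.Ici 0))
    (hr_lim : Tendsto r (𝓝[>] (0 : ℝ)) (𝓝 0)) (hr_pos : ∀ l : ℝ, 0 < l → 0 < r l)
    (sig : ℝ → ℝ → ℝ) (siginv : ℝ → ℝ → ℝ)
    (hsig_mono : ∀ η : ℝ, 0 < η → StrictMono (sig η))
    (hsig_cont : ∀ η : ℝ, 0 < η → Continuous (sig η))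
    (hsig_range : ∀ η : ℝ, 0 < η → Set.range (sig η) = Set.Ioo 0 1)
    (hsig_inv : ∀ η : ℝ, 0 < η → ∀ y ∈ Set.Ioo (0 : ℝ) 1, sig η (siginv η y) = y)
    (eta : ℝ → ℝ) (heta : ∀ l : ℝ, 0 < l → 0 < eta l)
    (h : ∀ ε : ℝ, 0 < ε →
      Tendsto (fun l => siginv (eta l) (1 - ε * r l)) (𝓝[>] (0 : ℝ)) (𝓝 0)) :
    ∀ s : ℝ, 0 < s →
      Tendsto (fun l => (1 - sig (eta l) s) / r l) (𝓝[>] (0 : ℝ)) (𝓝 0) :=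
  stmt_13_general r hr_lim hr_pos sig siginv hsig_mono hsig_range hsig_inv eta heta h
end

section
/- (Key inductive-step lemma at a threshold point.) Let r and r' be convergence rates with r(λ) > 0 and r'(λ) > 0 for λ > 0, and for each η > 0 let σ_η : ℝ → ℝ be a strictly increasing continuous bijection of ℝ onto (0,1) with inverse σ_η^{−1} : (0,1) → ℝ. Let λ ↦ η(λ) be a function (0,∞) → (0,∞). Assume: (i) (1 − σ_{η(λ)}(0)) / r(λ) → 0 as λ → 0⁺; and (ii) for every ε > 0, r'(λ) / σ_{η(λ)}^{−1}(1 − ε r(λ)) → 0 as λ → 0⁺ (note that (i) implies σ_{η(λ)}^{−1}(1 − ε r(λ)) < 0 for λ small enough, so the quotient is eventually defined and negative). Let ŝ : (0,∞) → ℝ be any function and C ≥ 0 a constant such that |ŝ(λ)| ≤ C · r'(λ) for all sufficiently small λ > 0. Then (1 − σ_{η(λ)}(ŝ(λ))) / r(λ) → 0 as λ → 0⁺. -/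
/-!
Fix `c > 0` and let `t(λ) = σ_{η(λ)}⁻¹(1 - c r(λ))` be the point where `σ_{η(λ)}` reaches the level
`1 - c r(λ)`. By (i), `σ_{η(λ)}(0)` is eventually above that level, so `t(λ) < 0`; by (ii),
`r' = o(t)`, hence also `ŝ = O(r') = o(t)`. Thus eventually `|ŝ(λ)| < |t(λ)| = -t(λ)`, so `ŝ(λ)` lies
to the right of `t(λ)` and `1 - c r(λ) < σ_{η(λ)}(ŝ(λ)) < 1`, i.e. `1 - σ_{η(λ)}(ŝ(λ)) = o(r)`.
-/

open Topology Filter Asymptotics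

theorem StrictMono.apply_lt_apply_of_abs_lt {f : ℝ → ℝ} (hf : StrictMono f) {t s : ℝ}
    (ht : f t < f 0) (hs : |s| < |t|) : f t < f s := by
  have ht_neg : t < 0 := hf.lt_iff_lt.1 ht
  rw [abs_of_neg ht_neg] at hs
  exact hf (by linarith [neg_abs_le s])

theorem Asymptotics.isBigO_of_abs_le_mul {α : Type*} {l : Filter α} {f g : α → ℝ} (C : ℝ)
    (h : ∀ᶠ x in l, |f x| ≤ C * g x) : f =O[l] g :=
  IsBigO.of_bound |C| <| h.mono fun _ hx => by
    simpa only [Real.norm_eq_abs, ← abs_mul] using hx.trans (le_abs_self _)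

theorem Asymptotics.IsLittleO.eventually_abs_lt {α : Type*} {l : Filter α} {f g : α → ℝ}
    (h : f =o[l] g) (hg : ∀ᶠ x in l, g x ≠ 0) : ∀ᶠ x in l, |f x| < |g x| := by
  filter_upwards [h.bound one_half_pos, hg] with x hx hgx
  rw [Real.norm_eq_abs, Real.norm_eq_abs] at hx
  linarith [abs_pos.2 hgx]

theorem Asymptotics.isLittleO_iff_tendsto_of_eventually_ne {α : Type*} {l : Filter α}
    {f g : α → ℝ} (hg : ∀ᶠ x in l, g x ≠ 0) :
    f =o[l] g ↔ Tendsto (fun x => f x / g x) l (𝓝 0) :=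
  isLittleO_iff_tendsto' (hg.mono fun _ hx h0 => absurd h0 hx)

theorem stmt_14_general (r r' : ℝ → ℝ)
    (hr_lim : Tendsto r (𝓝[>] (0 : ℝ)) (𝓝 0)) (hr_pos : ∀ l : ℝ, 0 < l → 0 < r l)
    (sig : ℝ → ℝ → ℝ) (siginv : ℝ → ℝ → ℝ)
    (hsig_mono : ∀ η : ℝ, 0 < η → StrictMono (sig η))
    (hsig_range : ∀ η : ℝ, 0 < η → Set.range (sig η) = Set.Ioo 0 1)
    (hsig_inv : ∀ η : ℝ, 0 < η → ∀ y ∈ Set.Ioo (0 : ℝ) 1, sig η (siginv η y) = y)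
    (eta : ℝ → ℝ) (heta : ∀ l : ℝ, 0 < l → 0 < eta l)
    (hyp_i : Tendsto (fun l => (1 - sig (eta l) 0) / r l) (𝓝[>] (0 : ℝ)) (𝓝 0))
    (hyp_ii : ∀ ε : ℝ, 0 < ε →
      Tendsto (fun l => r' l / siginv (eta l) (1 - ε * r l)) (𝓝[>] (0 : ℝ)) (𝓝 0))
    (shat : ℝ → ℝ) (C : ℝ)
    (hshat : ∀ᶠ l in 𝓝[>] (0 : ℝ), |shat l| ≤ C * r' l) :
    Tendsto (fun l => (1 - sig (eta l) (shat l)) / r l) (𝓝[>] (0 : ℝ)) (𝓝 0) := by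
  have hpos : ∀ᶠ l in 𝓝[>] (0 : ℝ), 0 < l := eventually_mem_nhdsWithin
  have hr : ∀ᶠ l in 𝓝[>] (0 : ℝ), 0 < r l := hpos.mono hr_pos
  rw [← isLittleO_iff_tendsto_of_eventually_ne (hr.mono fun _ h => h.ne')] at hyp_i ⊢
  refine IsLittleO.of_bound fun c hc => ?_
  set t := fun l => siginv (eta l) (1 - c * r l)
  have hcr : ∀ᶠ l in 𝓝[>] (0 : ℝ), c * r l < 1 := by
    simpa using (hr_lim.const_mul c).eventually (gt_mem_nhds (by simp))
  have hsig_t : ∀ᶠ l in 𝓝[>] (0 : ℝ), sig (eta l) (t l) = 1 - c * r l := by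
    filter_upwards [hpos, hr, hcr] with l hl hrl hcrl
    exact hsig_inv _ (heta l hl) _ ⟨by linarith, by nlinarith⟩
  have ht : ∀ᶠ l in 𝓝[>] (0 : ℝ), sig (eta l) (t l) < sig (eta l) 0 := by
    filter_upwards [hsig_t, hr, hyp_i.bound (half_pos hc)] with l hsig hrl hbound
    rw [Real.norm_eq_abs, Real.norm_eq_abs, abs_of_pos hrl] at hbound
    nlinarith [le_abs_self (1 - sig (eta l) 0)]
  have ht_ne : ∀ᶠ l in 𝓝[>] (0 : ℝ), t l ≠ 0 := ht.mono fun _ h h0 => (h0 ▸ h).false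
  have hshat_o : shat =o[𝓝[>] 0] t :=
    (isBigO_of_abs_le_mul C hshat).trans_isLittleO <|
      (isLittleO_iff_tendsto_of_eventually_ne ht_ne).2 (hyp_ii c hc)
  filter_upwards [hpos, hr, hsig_t, ht, hshat_o.eventually_abs_lt ht_ne]
    with l hl hrl hsig htl hshat_lt
  have hη := heta l hl
  have hlower := hsig ▸ (hsig_mono _ hη).apply_lt_apply_of_abs_lt htl hshat_lt
  have hupper : sig (eta l) (shat l) < 1 :=
    ((hsig_range _ hη).le (Set.mem_range_self (shat l))).2
  rw [Real.norm_eq_abs, Real.norm_eq_abs, abs_of_pos hrl]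
  exact abs_le.2 ⟨by linarith, by linarith⟩

theorem stmt_14 (r r' : ℝ → ℝ)
    (hr_cont : ContinuousOn r (Set.Ici 0)) (hr_mono : MonotoneOn r (Set.Ici 0))
    (hr_lim : Tendsto r (𝓝[>] (0 : ℝ)) (𝓝 0)) (hr_pos : ∀ l : ℝ, 0 < l → 0 < r l)
    (hr'_cont : ContinuousOn r' (Set.Ici 0)) (hr'_mono : MonotoneOn r' (Set.Ici 0))
    (hr'_lim : Tendsto r' (𝓝[>] (0 : ℝ)) (𝓝 0)) (hr'_pos : ∀ l : ℝ, 0 < l → 0 < r' l)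
    (sig : ℝ → ℝ → ℝ) (siginv : ℝ → ℝ → ℝ)
    (hsig_mono : ∀ η : ℝ, 0 < η → StrictMono (sig η))
    (hsig_cont : ∀ η : ℝ, 0 < η → Continuous (sig η))
    (hsig_range : ∀ η : ℝ, 0 < η → Set.range (sig η) = Set.Ioo 0 1)
    (hsig_inv : ∀ η : ℝ, 0 < η → ∀ y ∈ Set.Ioo (0 : ℝ) 1, sig η (siginv η y) = y)
    (eta : ℝ → ℝ) (heta : ∀ l : ℝ, 0 < l → 0 < eta l)
    (hyp_i : Tendsto (fun l => (1 - sig (eta l) 0) / r l) (𝓝[>] (0 : ℝ)) (𝓝 0))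
    (hyp_ii : ∀ ε : ℝ, 0 < ε →
      Tendsto (fun l => r' l / siginv (eta l) (1 - ε * r l)) (𝓝[>] (0 : ℝ)) (𝓝 0))
    (shat : ℝ → ℝ) (C : ℝ) (hC : 0 ≤ C)
    (hshat : ∀ᶠ l in 𝓝[>] (0 : ℝ), |shat l| ≤ C * r' l) :
    Tendsto (fun l => (1 - sig (eta l) (shat l)) / r l) (𝓝[>] (0 : ℝ)) (𝓝 0) :=
  stmt_14_general r r' hr_lim hr_pos sig siginv hsig_mono hsig_range hsig_inv eta heta hyp_i hyp_ii
    shat C hshat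
end
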